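/- arXiv:2208.08345 — 3 statements merged into one kernel-verified Lean document; each statement's English description precedes it below -/
import Mathlib

section
/- Applying the Mechanism Identification algorithm (game graph to mechanised causal graph) followed by the Agency Identification algorithm (mechanised causal graph to game graph) to any game graph satisfying the structural assumption on decision-utility components returns the original game graph: a₂(a₃(G)) = G. -/
/-!
The terminal edges of `a₃(G)` are the agent-subgraph edges `D ⇝ U` of `G`, reversed, so their
weakly connected components are those of the decision-utility subgraph, i.e. by assumption the
(disjoint) agent sets `Dec A ∪ Util A`. Each such set contains both a decision and a utility, so
every decision or utility of `G` is joined to a node other than itself; since edges only run from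
decisions to utilities, its first step is an outgoing edge if it is a decision and an incoming one
if it is a utility. Hence `a₂` labels it correctly.
-/

open Relation Function

theorem exists_rel_of_reflTransGen_symmGen {α : Type*} {r : α → α → Prop} {a b : α}
    (h : ReflTransGen (SymmGen r) a b) (hab : a ≠ b) (ha : ∀ c, ¬ r c a) : ∃ c, r a c := by
  obtain rfl | ⟨c, hac | hca, -⟩ := h.cases_head
  · exact absurd rfl hab
  · exact ⟨c, hac⟩
  · exact absurd hca (ha c)

theorem exists_rel_swap_of_reflTransGen_symmGen {α : Type*} {r : α → α → Prop} {a b : α}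
    (h : ReflTransGen (SymmGen r) a b) (hab : a ≠ b) (ha : ∀ c, ¬ r a c) : ∃ c, r c a :=
  exists_rel_of_reflTransGen_symmGen (r := swap r) (by rwa [symmGen_swap]) hab ha

section AgentComponents

variable {V Ag : Type*}

def decUtilNodes (Dec Util : Ag → Set V) : Set V := (⋃ A, Dec A) ∪ (⋃ A, Util A)

def weakComponent (r : V → V → Prop) (S : Set V) (x : V) : Set V :=
  {y | y ∈ S ∧ ReflTransGen (SymmGen r) x y}

def ComponentsAreAgents (R : V → V → Prop) (Dec Util : Ag → Set V) : Prop :=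
  ∀ x ∈ decUtilNodes Dec Util, ∃ A,
    weakComponent R (decUtilNodes Dec Util) x = Dec A ∪ Util A ∧
      (Dec A).Nonempty ∧ (Util A).Nonempty

variable {Dec Util : Ag → Set V} {R : V → V → Prop}

theorem agent_eq_of_mem_decUtil
    (hDisjDU : ∀ A B v, v ∈ Dec A → v ∈ Util B → False)
    (hDisjDD : ∀ A B v, v ∈ Dec A → v ∈ Dec B → A = B)
    (hDisjUU : ∀ A B v, v ∈ Util A → v ∈ Util B → A = B)
    {A B : Ag} {v : V} (hA : v ∈ Dec A ∪ Util A) (hB : v ∈ Dec B ∪ Util B) : A = B := by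
  rcases hA with hA | hA <;> rcases hB with hB | hB
  exacts [hDisjDD A B v hA hB, (hDisjDU A B v hA hB).elim, (hDisjDU B A v hB hA).elim,
    hDisjUU A B v hA hB]

theorem exists_rel_of_mem_dec
    (hR : ∀ a b, R a b → (∃ A, a ∈ Dec A) ∧ ∃ A, b ∈ Util A)
    (hDisjDU : ∀ A B v, v ∈ Dec A → v ∈ Util B → False)
    (hcomp : ComponentsAreAgents R Dec Util)
    {A : Ag} {v : V} (hv : v ∈ Dec A) : ∃ u, R v u := by
  obtain ⟨B, hcompB, -, U, hU⟩ := hcomp v (.inl (Set.mem_iUnion_of_mem A hv))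
  have hvU : U ∈ weakComponent R (decUtilNodes Dec Util) v := by rw [hcompB]; exact .inr hU
  refine exists_rel_of_reflTransGen_symmGen hvU.2 ?_ fun c hcv => ?_
  · rintro rfl
    exact hDisjDU A B v hv hU
  · obtain ⟨C, hC⟩ := (hR c v hcv).2
    exact hDisjDU A C v hv hC

theorem exists_rel_of_mem_util
    (hR : ∀ a b, R a b → (∃ A, a ∈ Dec A) ∧ ∃ A, b ∈ Util A)
    (hDisjDU : ∀ A B v, v ∈ Dec A → v ∈ Util B → False)
    (hcomp : ComponentsAreAgents R Dec Util)
    {A : Ag} {v : V} (hv : v ∈ Util A) : ∃ d, R d v := by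
  obtain ⟨B, hcompB, ⟨D, hD⟩, -⟩ := hcomp v (.inr (Set.mem_iUnion_of_mem A hv))
  have hvD : D ∈ weakComponent R (decUtilNodes Dec Util) v := by rw [hcompB]; exact .inl hD
  refine exists_rel_swap_of_reflTransGen_symmGen hvD.2 ?_ fun c hvc => ?_
  · rintro rfl
    exact hDisjDU B A v hD hv
  · obtain ⟨C, hC⟩ := (hR v c hvc).1
    exact hDisjDU C A v hC hv

theorem reflTransGen_symmGen_iff_exists_agent
    (hDisjDU : ∀ A B v, v ∈ Dec A → v ∈ Util B → False)
    (hDisjDD : ∀ A B v, v ∈ Dec A → v ∈ Dec B → A = B)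
    (hDisjUU : ∀ A B v, v ∈ Util A → v ∈ Util B → A = B)
    (hcomp : ComponentsAreAgents R Dec Util)
    {x y : V} (hx : x ∈ decUtilNodes Dec Util) (hy : y ∈ decUtilNodes Dec Util) :
    ReflTransGen (SymmGen R) x y ↔ ∃ A, x ∈ Dec A ∪ Util A ∧ y ∈ Dec A ∪ Util A := by
  obtain ⟨A, hcompA, -⟩ := hcomp x hx
  have hxA : x ∈ Dec A ∪ Util A := hcompA ▸ ⟨hx, .refl⟩
  constructor
  · exact fun hxy => ⟨A, hxA, hcompA ▸ ⟨hy, hxy⟩⟩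
  · rintro ⟨B, hxB, hyB⟩
    obtain rfl := agent_eq_of_mem_decUtil hDisjDU hDisjDD hDisjUU hxA hxB
    exact (hcompA ▸ hyB : y ∈ weakComponent R _ x).2

end AgentComponents

/-- Agency Identification (a₂) applied after Mechanism Identification (a₃) returns
the original game graph: a₂(a₃(G)) = G.  Here a₃ produces the terminal edges
`(~Y, ~D)` for `D` a decision of agent `A` and `Y` a utility of `A` with a directed
path `D ⇝ Y` avoiding other utilities of `A`; a₂ labels a node a decision iff its
mechanism has an incoming terminal edge, a utility iff it has an outgoing terminal
edge, keeps the object-level edges, and colours decisions/utilities by the weakly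
connected components of the terminal-edge graph.  Under the structural assumption
on the decision-utility components, the recovered decisions, utilities, object
edges and agent colouring coincide with those of `G`. -/
theorem agency_after_mechanism_identification_is_identity
    {V : Type*} {Ag : Type*}
    (E : V → V → Prop)
    (Dec Util : Ag → Set V)
    (hDisjDU : ∀ A B v, v ∈ Dec A → v ∈ Util B → False)
    (hDisjDD : ∀ A B v, v ∈ Dec A → v ∈ Dec B → A = B)
    (hDisjUU : ∀ A B v, v ∈ Util A → v ∈ Util B → A = B)
    -- agent-subgraph edges of G
    (AgentEdge : Ag → V → V → Prop)
    (hAgentEdge : ∀ A D U, AgentEdge A D U ↔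
      D ∈ Dec A ∧ U ∈ Util A ∧
        Relation.TransGen (fun a b => E a b ∧ (b = U ∨ b ∉ Util A)) D U)
    -- structural assumption: every weakly connected component of the
    -- decision-utility subgraph is an agent subgraph with ≥ 1 decision and ≥ 1 utility
    (hcomp : ∀ x ∈ (⋃ A, Dec A) ∪ (⋃ A, Util A), ∃ A,
      {y | (y ∈ (⋃ A', Dec A') ∪ (⋃ A', Util A')) ∧
          Relation.ReflTransGen
            (fun a b => (∃ A', AgentEdge A' a b) ∨ (∃ A', AgentEdge A' b a)) x y}
        = Dec A ∪ Util A
      ∧ (Dec A).Nonempty ∧ (Util A).Nonempty)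
    -- a₃: the terminal edges of the mechanised causal graph
    (Eterm : V → V → Prop)
    (hEterm : ∀ Y D, Eterm Y D ↔ ∃ A, AgentEdge A D Y)
    -- a₂ applied to the result of a₃
    (DecOut UtilOut : Set V) (EOut : V → V → Prop)
    (hDecOut : DecOut = {D | ∃ Y, Eterm Y D})
    (hUtilOut : UtilOut = {Y | ∃ D, Eterm Y D})
    (hEOut : ∀ x y, EOut x y ↔ E x y)  -- a₂ outputs the object-level edges
    (SameAgentOut : V → V → Prop)
    (hSame : ∀ x y, SameAgentOut x y ↔
      Relation.ReflTransGen (fun a b => Eterm a b ∨ Eterm b a) x y) :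
    -- a₂(a₃(G)) = G :
    (∀ v, v ∈ DecOut ↔ ∃ A, v ∈ Dec A) ∧
    (∀ v, v ∈ UtilOut ↔ ∃ A, v ∈ Util A) ∧
    (∀ x y, EOut x y ↔ E x y) ∧
    (∀ x y, x ∈ DecOut ∪ UtilOut → y ∈ DecOut ∪ UtilOut →
      (SameAgentOut x y ↔ ∃ A, x ∈ Dec A ∪ Util A ∧ y ∈ Dec A ∪ Util A)) := by
  let R : V → V → Prop := fun a b => ∃ A, AgentEdge A a b
  have hR : ∀ a b, R a b → (∃ A, a ∈ Dec A) ∧ ∃ A, b ∈ Util A := fun a b ⟨A, hab⟩ =>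
    have hab := (hAgentEdge A a b).1 hab
    ⟨⟨A, hab.1⟩, ⟨A, hab.2.1⟩⟩
  have hEterm' : Eterm = swap R := funext₂ fun Y D => propext (hEterm Y D)
  have hDec : ∀ v, v ∈ DecOut ↔ ∃ A, v ∈ Dec A := fun v => by
    rw [hDecOut, hEterm']
    exact ⟨fun ⟨u, hu⟩ => (hR v u hu).1, fun ⟨A, hv⟩ => exists_rel_of_mem_dec hR hDisjDU hcomp hv⟩
  have hUtil : ∀ v, v ∈ UtilOut ↔ ∃ A, v ∈ Util A := fun v => by
    rw [hUtilOut, hEterm']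
    exact ⟨fun ⟨d, hd⟩ => (hR d v hd).2, fun ⟨A, hv⟩ => exists_rel_of_mem_util hR hDisjDU hcomp hv⟩
  have hNodes : DecOut ∪ UtilOut = decUtilNodes Dec Util := by
    ext v
    simp only [Set.mem_union, hDec, hUtil, decUtilNodes, Set.mem_iUnion]
  refine ⟨hDec, hUtil, hEOut, fun x y hx hy => ?_⟩
  rw [hNodes] at hx hy
  rw [hSame, ← reflTransGen_symmGen_iff_exists_agent hDisjDU hDisjDD hDisjUU hcomp hx hy]
  change ReflTransGen (SymmGen Eterm) x y ↔ _
  rw [hEterm', symmGen_swap]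
end

section
/- Let Γ be a mechanised causal graph such that Γ = a₁(M) for some mechanised causal game M satisfying the five assumptions, and such that every mechanism node with an incoming mechanism edge also has an incoming terminal edge. Then a₃(a₂(Γ)) = Γ, i.e., Mechanism Identification is a left inverse of Agency Identification on this class of graphs. -/
inductive GWalk {V : Type*} (E : V → V → Prop) : V → V → List V → Prop
  | single (v : V) : GWalk E v v [v]
  | cons {a b c : V} {l : List V} :
      (E a b ∨ E b a) → GWalk E b c l → GWalk E a c (a :: l)

def ActiveTriple {V : Type*} (E : V → V → Prop) (Z : Set V) (a b c : V) : Prop :=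
  (E a b ∧ E c b ∧ ∃ d ∈ Z, Relation.ReflTransGen E b d) ∨
  (¬(E a b ∧ E c b) ∧ b ∉ Z)

def ActiveTriples {V : Type*} (E : V → V → Prop) (Z : Set V) : List V → Prop
  | a :: b :: c :: rest => ActiveTriple E Z a b c ∧ ActiveTriples E Z (b :: c :: rest)
  | _ => True

def DConn {V : Type*} (E : V → V → Prop) (Z : Set V) (x y : V) : Prop :=
  ∃ l, GWalk E x y l ∧ ActiveTriples E Z l

def HatE {V : Type*} (E : V → V → Prop) (Y : V) : Option V → Option V → Prop :=
  fun a b =>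
    match a, b with
    | some a, some b => E a b
    | none, some b => b = Y
    | _, _ => False

def SReach {V : Type*} (E : V → V → Prop) (PaD : Set V) (D : V) (UD : Set V)
    (Y : V) : Prop :=
  ∃ u ∈ UD, DConn (HatE E Y) (some '' (insert D PaD)) none (some u)

/-!
By assumption 1, the terminal-edge component of a decision `D` of agent `A` consists exactly of
the decisions and utilities of `A`. Since decisions have no outgoing and utilities no incoming
terminal edges, the utilities of `A` are precisely the nodes of this component with an outgoing
terminal edge, which is how `a₂(Γ)` reads them off. Hence the utility sets that `a₃` feeds into the
directed-path condition and into s-reachability are the true ones, and the key lemma returns the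
edges of `Γ`; the extra hypothesis guarantees that every mechanism edge ends in a decision, where
the key lemma applies.
-/

open Relation

section

variable {V Ag : Type*} {Dec Util : Ag → Set V} {AgentEdge : Ag → V → V → Prop}
  {Eterm : V → V → Prop}

theorem agentComponent_eq_of_mem_dec
    (hDisjDU : ∀ A B v, v ∈ Dec A → v ∈ Util B → False)
    (hDisjDD : ∀ A B v, v ∈ Dec A → v ∈ Dec B → A = B)
    {A : Ag} {D : V} (hD : D ∈ Dec A)
    (hcomp : ∃ A', {y | (∃ A'', y ∈ Dec A'' ∨ y ∈ Util A'') ∧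
        ReflTransGen (SymmGen fun a b => ∃ A'', AgentEdge A'' a b) D y}
      = {y | y ∈ Dec A' ∨ y ∈ Util A'}) :
    {y | (∃ A'', y ∈ Dec A'' ∨ y ∈ Util A'') ∧
        ReflTransGen (SymmGen fun a b => ∃ A'', AgentEdge A'' a b) D y}
      = {y | y ∈ Dec A ∨ y ∈ Util A} := by
  obtain ⟨A', hA'⟩ := hcomp
  have hD' : D ∈ Dec A' ∨ D ∈ Util A' := hA'.subset ⟨⟨A, .inl hD⟩, .refl⟩
  obtain rfl : A' = A := hD'.elim (hDisjDD A' A D · hD) (hDisjDU A A' D hD · |>.elim)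
  exact hA'

theorem reflTransGen_symmGen_comm_of_iff_swap {r s : V → V → Prop}
    (h : ∀ x y, r x y ↔ s y x) {a b : V} :
    ReflTransGen (SymmGen r) a b ↔ ReflTransGen (SymmGen s) b a := by
  obtain rfl : r = Function.swap s := funext₂ fun x y => propext (h x y)
  rw [symmGen_swap]
  exact Std.Symm.iff (r := ReflTransGen (SymmGen s)) a b

theorem mem_util_iff_of_mem_dec
    (hDisjDU : ∀ A B v, v ∈ Dec A → v ∈ Util B → False)
    (hEdge : ∀ A D U, AgentEdge A D U → D ∈ Dec A ∧ U ∈ Util A)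
    (hEterm : ∀ Y D, Eterm Y D ↔ ∃ A, AgentEdge A D Y)
    {A : Ag} {D : V} (hD : D ∈ Dec A)
    (hcomp : {y | (∃ A'', y ∈ Dec A'' ∨ y ∈ Util A'') ∧
        ReflTransGen (SymmGen fun a b => ∃ A'', AgentEdge A'' a b) D y}
      = {y | y ∈ Dec A ∨ y ∈ Util A})
    (u : V) :
    u ∈ Util A ↔ (∃ D', Eterm u D') ∧ ReflTransGen (SymmGen Eterm) u D := by
  simp only [reflTransGen_symmGen_comm_of_iff_swap hEterm, hEterm]
  constructor
  · intro hu
    have hconn : ReflTransGen (SymmGen fun a b => ∃ A'', AgentEdge A'' a b) D u :=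
      (hcomp.symm.subset (Or.inr hu)).2
    refine ⟨?_, hconn⟩
    -- the last step of the walk from `D` enters `u`, since `u` is not a decision
    rcases hconn.cases_tail with rfl | ⟨c, -, ⟨A', hA'⟩ | ⟨A', hA'⟩⟩
    · exact (hDisjDU A A u hD hu).elim
    · exact ⟨c, A', hA'⟩
    · exact (hDisjDU A' A u (hEdge A' u c hA').1 hu).elim
  · rintro ⟨⟨D', A', hA'⟩, hconn⟩
    have huA' := (hEdge A' D' u hA').2
    have hu : u ∈ Dec A ∨ u ∈ Util A := hcomp.subset ⟨⟨A', .inr huA'⟩, hconn⟩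
    exact hu.resolve_left (hDisjDU A A' u · huA')

theorem exists_mem_dec_of_eterm
    (hDec : ∀ A D U, AgentEdge A D U → D ∈ Dec A)
    (hEterm : ∀ Y D, Eterm Y D ↔ ∃ A, AgentEdge A D Y)
    {Y D : V} (h : Eterm Y D) : ∃ A, D ∈ Dec A :=
  ((hEterm Y D).1 h).imp fun A hA => hDec A D Y hA

theorem pathCondition_iff_eterm (E : V → V → Prop)
    (hAgentEdge : ∀ A D U, AgentEdge A D U ↔
      D ∈ Dec A ∧ U ∈ Util A ∧
        TransGen (fun a b => E a b ∧ (b = U ∨ b ∉ Util A)) D U)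
    (hEterm : ∀ Y D, Eterm Y D ↔ ∃ A, AgentEdge A D Y)
    (hUtil : ∀ A D, D ∈ Dec A → ∀ u,
      u ∈ Util A ↔ (∃ D', Eterm u D') ∧ ReflTransGen (SymmGen Eterm) u D)
    (Y D : V) :
    ((∃ Y', Eterm Y' D) ∧ (∃ D', Eterm Y D') ∧
        TransGen (fun a b => E a b ∧ (b = Y ∨
          ¬((∃ D', Eterm b D') ∧ ReflTransGen (SymmGen Eterm) b D))) D Y ∧
        ReflTransGen (SymmGen Eterm) Y D)
      ↔ Eterm Y D := by
  have hDec : ∀ A D U, AgentEdge A D U → D ∈ Dec A := fun A D U h => ((hAgentEdge A D U).1 h).1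
  constructor
  · rintro ⟨⟨Y', hY'⟩, hYout, hpath, hconn⟩
    obtain ⟨A, hD⟩ := exists_mem_dec_of_eterm hDec hEterm hY'
    refine (hEterm Y D).2 ⟨A, (hAgentEdge A D Y).2 ⟨hD, (hUtil A D hD Y).2 ⟨hYout, hconn⟩, ?_⟩⟩
    simpa only [hUtil A D hD] using hpath
  · intro hYD
    obtain ⟨A, hA⟩ := (hEterm Y D).1 hYD
    obtain ⟨hD, -, hpath⟩ := (hAgentEdge A D Y).1 hA
    refine ⟨⟨Y, hYD⟩, ⟨D, hYD⟩, ?_, .single (.inl hYD)⟩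
    simpa only [hUtil A D hD] using hpath

theorem sReach_iff_emech (E : V → V → Prop) {Emech : V → V → Prop}
    (hDec : ∀ A D U, AgentEdge A D U → D ∈ Dec A)
    (hEterm : ∀ Y D, Eterm Y D ↔ ∃ A, AgentEdge A D Y)
    (hUtil : ∀ A D, D ∈ Dec A → ∀ u,
      u ∈ Util A ↔ (∃ D', Eterm u D') ∧ ReflTransGen (SymmGen Eterm) u D)
    (hEmech : ∀ A D, D ∈ Dec A → ∀ Y, Y ≠ D →
      (Emech Y D ↔ SReach E {w | E w D} D {u | u ∈ Util A ∧ TransGen E D u} Y))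
    (hnoself : ∀ v, ¬ Emech v v)
    (hbullet : ∀ W Vv, Emech W Vv → ∃ W', Eterm W' Vv)
    (Y D : V) :
    ((∃ Y', Eterm Y' D) ∧ Y ≠ D ∧
        SReach E {w | E w D} D
          {u | (∃ D', Eterm u D') ∧ ReflTransGen (SymmGen Eterm) u D ∧ TransGen E D u} Y)
      ↔ Emech Y D := by
  have hEmech' : ∀ A, D ∈ Dec A → Y ≠ D → (Emech Y D ↔ SReach E {w | E w D} D
      {u | (∃ D', Eterm u D') ∧ ReflTransGen (SymmGen Eterm) u D ∧ TransGen E D u} Y) := by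
    intro A hD hne
    simpa only [hUtil A D hD, and_assoc] using hEmech A D hD Y hne
  constructor
  · rintro ⟨⟨Y', hY'⟩, hne, hS⟩
    obtain ⟨A, hD⟩ := exists_mem_dec_of_eterm hDec hEterm hY'
    exact (hEmech' A hD hne).2 hS
  · intro hM
    obtain ⟨Y', hY'⟩ := hbullet Y D hM
    obtain ⟨A, hD⟩ := exists_mem_dec_of_eterm hDec hEterm hY'
    have hne : Y ≠ D := fun h => hnoself D (h ▸ hM)
    exact ⟨⟨Y', hY'⟩, hne, (hEmech' A hD hne).1 hM⟩

end

theorem mechanism_identification_left_inverse_of_agency_identification_general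
    {V : Type*} {Ag : Type*}
    (E : V → V → Prop)                                -- object-level edges of Γ
    (Dec Util : Ag → Set V)                           -- the agents of M
    (hDisjDU : ∀ A B v, v ∈ Dec A → v ∈ Util B → False)
    (hDisjDD : ∀ A B v, v ∈ Dec A → v ∈ Dec B → A = B)
    (AgentEdge : Ag → V → V → Prop)
    (hAgentEdge : ∀ A D U, AgentEdge A D U ↔
      D ∈ Dec A ∧ U ∈ Util A ∧
        Relation.TransGen (fun a b => E a b ∧ (b = U ∨ b ∉ Util A)) D U)
    -- assumption 1 of M: components of the decision-utility subgraph
    (hcomp : ∀ x, (∃ A, x ∈ Dec A ∨ x ∈ Util A) → ∃ A,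
      {y | (∃ A', y ∈ Dec A' ∨ y ∈ Util A') ∧
          Relation.ReflTransGen
            (fun a b => (∃ A', AgentEdge A' a b) ∨ (∃ A', AgentEdge A' b a)) x y}
        = {y | y ∈ Dec A ∨ y ∈ Util A}
      ∧ (∃ d, d ∈ Dec A) ∧ (∃ u, u ∈ Util A))
    -- the edges of Γ = a₁(M), characterised by the key lemma
    (Emech Eterm : V → V → Prop)
    (hEterm : ∀ Y D, Eterm Y D ↔ ∃ A, AgentEdge A D Y)
    (hEmech : ∀ A D, D ∈ Dec A → ∀ Y, Y ≠ D →
      (Emech Y D ↔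
        SReach E {w | E w D} D {u | u ∈ Util A ∧ Relation.TransGen E D u} Y))
    (hnoself : ∀ v, ¬ Emech v v)
    -- only decision mechanisms have incoming mechanism edges, and (second bullet)
    -- every node with an incoming mechanism edge has an incoming terminal edge
    (hbullet : ∀ W Vv, Emech W Vv → ∃ W', Eterm W' Vv) :
    -- a₃(a₂(Γ)) = Γ : recomputing the terminal and mechanism edges from the game
    -- graph a₂(Γ) (decisions = mechanisms with incoming terminal edges, utilities
    -- = mechanisms with outgoing terminal edges, agents = terminal components)
    -- returns the edges of Γ
    (∀ Y D, ((∃ Y', Eterm Y' D) ∧ (∃ D', Eterm Y D') ∧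
        Relation.TransGen
          (fun a b => E a b ∧ (b = Y ∨
            ¬((∃ D', Eterm b D') ∧
              Relation.ReflTransGen (fun x y => Eterm x y ∨ Eterm y x) b D))) D Y ∧
        Relation.ReflTransGen (fun x y => Eterm x y ∨ Eterm y x) Y D)
      ↔ Eterm Y D) ∧
    (∀ Y D, ((∃ Y', Eterm Y' D) ∧ Y ≠ D ∧
        SReach E {w | E w D} D
          {u | (∃ D', Eterm u D') ∧
            Relation.ReflTransGen (fun x y => Eterm x y ∨ Eterm y x) u D ∧
            Relation.TransGen E D u} Y)
      ↔ Emech Y D) := by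
  have hEdge : ∀ A D U, AgentEdge A D U → D ∈ Dec A ∧ U ∈ Util A :=
    fun A D U h => ((hAgentEdge A D U).1 h).imp_right And.left
  have hUtil : ∀ A D, D ∈ Dec A → ∀ u,
      u ∈ Util A ↔ (∃ D', Eterm u D') ∧ ReflTransGen (SymmGen Eterm) u D :=
    fun A D hD => mem_util_iff_of_mem_dec hDisjDU hEdge hEterm hD <|
      agentComponent_eq_of_mem_dec hDisjDU hDisjDD hD <|
        (hcomp D ⟨A, .inl hD⟩).imp fun _ h => h.1
  exact ⟨pathCondition_iff_eterm E hAgentEdge hEterm hUtil,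
    sReach_iff_emech E (fun A D U h => (hEdge A D U h).1) hEterm hUtil hEmech hnoself hbullet⟩

/-- Mechanism Identification (a₃) is a left inverse of Agency Identification (a₂):
let `Γ` be a mechanised causal graph that (i) is `a₁(M)` for a mechanised causal
game `M` satisfying the five assumptions — so by the key lemma its mechanism edges
into decision mechanisms are characterised by s-reachability and its terminal
edges by the directed-path condition — and (ii) is such that every mechanism node
with an incoming mechanism edge also has an incoming terminal edge.  Then
`a₃(a₂(Γ)) = Γ`. -/
theorem mechanism_identification_left_inverse_of_agency_identification
    {V : Type*} {Ag : Type*}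
    (E : V → V → Prop)                                -- object-level edges of Γ
    (hacyc : ∀ x, ¬ Relation.TransGen E x x)
    (Dec Util : Ag → Set V)                           -- the agents of M
    (hDisjDU : ∀ A B v, v ∈ Dec A → v ∈ Util B → False)
    (hDisjDD : ∀ A B v, v ∈ Dec A → v ∈ Dec B → A = B)
    (hDisjUU : ∀ A B v, v ∈ Util A → v ∈ Util B → A = B)
    (AgentEdge : Ag → V → V → Prop)
    (hAgentEdge : ∀ A D U, AgentEdge A D U ↔
      D ∈ Dec A ∧ U ∈ Util A ∧
        Relation.TransGen (fun a b => E a b ∧ (b = U ∨ b ∉ Util A)) D U)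
    -- assumption 1 of M: components of the decision-utility subgraph
    (hcomp : ∀ x, (∃ A, x ∈ Dec A ∨ x ∈ Util A) → ∃ A,
      {y | (∃ A', y ∈ Dec A' ∨ y ∈ Util A') ∧
          Relation.ReflTransGen
            (fun a b => (∃ A', AgentEdge A' a b) ∨ (∃ A', AgentEdge A' b a)) x y}
        = {y | y ∈ Dec A ∨ y ∈ Util A}
      ∧ (∃ d, d ∈ Dec A) ∧ (∃ u, u ∈ Util A))
    -- the edges of Γ = a₁(M), characterised by the key lemma
    (Emech Eterm : V → V → Prop)
    (hEterm : ∀ Y D, Eterm Y D ↔ ∃ A, AgentEdge A D Y)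
    (hEmech : ∀ A D, D ∈ Dec A → ∀ Y, Y ≠ D →
      (Emech Y D ↔
        SReach E {w | E w D} D {u | u ∈ Util A ∧ Relation.TransGen E D u} Y))
    (hnoself : ∀ v, ¬ Emech v v)
    -- only decision mechanisms have incoming mechanism edges, and (second bullet)
    -- every node with an incoming mechanism edge has an incoming terminal edge
    (hbullet : ∀ W Vv, Emech W Vv → ∃ W', Eterm W' Vv) :
    -- a₃(a₂(Γ)) = Γ : recomputing the terminal and mechanism edges from the game
    -- graph a₂(Γ) (decisions = mechanisms with incoming terminal edges, utilities
    -- = mechanisms with outgoing terminal edges, agents = terminal components)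
    -- returns the edges of Γ
    (∀ Y D, ((∃ Y', Eterm Y' D) ∧ (∃ D', Eterm Y D') ∧
        Relation.TransGen
          (fun a b => E a b ∧ (b = Y ∨
            ¬((∃ D', Eterm b D') ∧
              Relation.ReflTransGen (fun x y => Eterm x y ∨ Eterm y x) b D))) D Y ∧
        Relation.ReflTransGen (fun x y => Eterm x y ∨ Eterm y x) Y D)
      ↔ Eterm Y D) ∧
    (∀ Y D, ((∃ Y', Eterm Y' D) ∧ Y ≠ D ∧
        SReach E {w | E w D} D
          {u | (∃ D', Eterm u D') ∧
            Relation.ReflTransGen (fun x y => Eterm x y ∨ Eterm y x) u D ∧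
            Relation.TransGen E D u} Y)
      ↔ Emech Y D) :=
  mechanism_identification_left_inverse_of_agency_identification_general E Dec Util hDisjDU hDisjDD
    AgentEdge hAgentEdge hcomp Emech Eterm hEterm hEmech hnoself hbullet
end

section
/- In the non-descendant utility two-agent game graph (A→U^B, B→U^B, B→U^A), the utility U^A of the agent controlling A is not a descendant of A; hence the agent subgraph for that agent has no edge from A to U^A and the decision-utility subgraph violates the assumption that each weakly connected component is an agent subgraph containing at least one decision and one utility; consequently Agency Identification applied to the discovered mechanised causal graph (with terminal edge only from the mechanism of U^B to the mechanism of B, and a mechanism edge from the mechanism of A to the mechanism of B) labels A and U^A as chance nodes. -/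
/-- The nodes of the non-descendant-utility two-agent game graph. -/
inductive NDU : Type
  | A | B | UA | UB
  deriving DecidableEq

/-- The object-level edges: A→U^B, B→U^B, B→U^A. -/
def NDUEdge : NDU → NDU → Prop :=
  fun a b =>
    match a, b with
    | NDU.A, NDU.UB => True
    | NDU.B, NDU.UB => True
    | NDU.B, NDU.UA => True
    | _, _ => False

/-- Agent 1 (`true`) has decision A and utility U^A; agent 2 (`false`) has
decision B and utility U^B. -/
def NDUDec : Bool → Set NDU := fun g => if g then {NDU.A} else {NDU.B}

def NDUUtil : Bool → Set NDU := fun g => if g then {NDU.UA} else {NDU.UB}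

/-- Agent-subgraph edges: a directed path from a decision of agent `g` to a
utility of `g` avoiding other utilities of `g`. -/
def NDUAgentEdge (g : Bool) (D U : NDU) : Prop :=
  D ∈ NDUDec g ∧ U ∈ NDUUtil g ∧
    Relation.TransGen (fun a b => NDUEdge a b ∧ (b = U ∨ b ∉ NDUUtil g)) D U

/-- The terminal edges of the discovered mechanised causal graph: only from the
mechanism of U^B into the mechanism of B. -/
def NDUTerm : NDU → NDU → Prop := fun y d => y = NDU.UB ∧ d = NDU.B

/-- The mechanism edges: from the mechanism of A into the mechanism of B. -/
def NDUMech : NDU → NDU → Prop := fun y d => y = NDU.A ∧ d = NDU.B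

theorem Relation.ReflTransGen.mem_of_isClosed {α : Type*} {r : α → α → Prop} {S : Set α}
    (hS : ∀ a b, a ∈ S → r a b → b ∈ S) {x y : α} (h : Relation.ReflTransGen r x y)
    (hx : x ∈ S) : y ∈ S := by
  induction h with
  | refl => exact hx
  | tail _ hbc ih => exact hS _ _ ih hbc

theorem nduEdge_reflTransGen_A {y : NDU} (h : Relation.ReflTransGen NDUEdge NDU.A y) :
    y ∈ ({NDU.A, NDU.UB} : Set NDU) := by
  refine h.mem_of_isClosed ?_ (by simp)
  rintro a b (rfl | rfl) hab <;> cases b <;> simp_all [NDUEdge]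

theorem not_transGen_nduEdge_A_UA : ¬ Relation.TransGen NDUEdge NDU.A NDU.UA := fun h => by
  simpa using nduEdge_reflTransGen_A h.to_reflTransGen

theorem not_nduAgentEdge_true (a b : NDU) : ¬ NDUAgentEdge true a b := by
  rintro ⟨ha, hb, hpath⟩
  simp only [NDUDec, NDUUtil, if_true, Set.mem_singleton_iff] at ha hb
  subst ha hb
  exact not_transGen_nduEdge_A_UA (Relation.TransGen.mono (fun _ _ hstep => hstep.1) _ _ hpath)

theorem NDUAgentEdge.eq {g : Bool} {a b : NDU} (h : NDUAgentEdge g a b) :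
    a = NDU.B ∧ b = NDU.UB := by
  cases g
  · simpa [NDUDec, NDUUtil] using And.intro h.1 h.2.1
  · exact absurd h (not_nduAgentEdge_true a b)

theorem nduAgentEdge_component_A {y : NDU}
    (h : Relation.ReflTransGen
      (fun a b => (∃ g, NDUAgentEdge g a b) ∨ (∃ g, NDUAgentEdge g b a)) NDU.A y) :
    y = NDU.A := by
  refine h.mem_of_isClosed (S := {NDU.A}) ?_ rfl
  rintro a b rfl (⟨g, hab⟩ | ⟨g, hba⟩)
  · exact absurd hab.eq.1 (by decide)
  · exact absurd hba.eq.2 (by decide)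

theorem A_not_mem_nduUtil (g : Bool) : NDU.A ∉ NDUUtil g := by
  cases g <;> simp [NDUUtil]

/-- In the non-descendant-utility example: U^A is not a descendant of A; hence
the agent subgraph of agent 1 has no edge from A to U^A; the decision-utility
subgraph violates the assumption that each weakly connected component is an agent
subgraph containing at least one decision and one utility; and consequently
Agency Identification applied to the discovered mechanised causal graph labels A
and U^A as chance nodes. -/
theorem non_descendant_utility_example :
    -- U^A is not a descendant of A
    (¬ Relation.TransGen NDUEdge NDU.A NDU.UA) ∧
    -- the agent subgraph for agent 1 has no edge from A to U^A
    (¬ NDUAgentEdge true NDU.A NDU.UA) ∧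
    -- the component assumption on the decision-utility subgraph is violated
    (¬ ∀ x, (∃ g, x ∈ NDUDec g ∨ x ∈ NDUUtil g) → ∃ g,
      {y | (∃ g', y ∈ NDUDec g' ∨ y ∈ NDUUtil g') ∧
          Relation.ReflTransGen
            (fun a b => (∃ g', NDUAgentEdge g' a b) ∨ (∃ g', NDUAgentEdge g' b a))
            x y}
        = {y | y ∈ NDUDec g ∨ y ∈ NDUUtil g}
      ∧ (∃ d, d ∈ NDUDec g) ∧ (∃ u, u ∈ NDUUtil g)) ∧
    -- Agency Identification labels A and U^A as chance nodes: neither has its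
    -- mechanism with an incoming terminal edge (decision) or an outgoing
    -- terminal edge (utility)
    ((¬ ∃ y, NDUTerm y NDU.A) ∧ (¬ ∃ d, NDUTerm NDU.A d) ∧
     (¬ ∃ y, NDUTerm y NDU.UA) ∧ (¬ ∃ d, NDUTerm NDU.UA d)) := by
  refine ⟨not_transGen_nduEdge_A_UA, not_nduAgentEdge_true _ _, ?_, by simp [NDUTerm]⟩
  intro hcomponents
  obtain ⟨g, hset, -, u, hu⟩ := hcomponents NDU.A ⟨true, Or.inl (by simp [NDUDec])⟩
  -- a utility of `g` would have to be weakly connected to `A`, whose component is `{A}`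
  have hu_reach := (hset.ge (Or.inr hu)).2
  exact A_not_mem_nduUtil g (nduAgentEdge_component_A hu_reach ▸ hu)
end
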